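/- arXiv:1105.3288 — 4 statements merged into one kernel-verified Lean document; each statement's English description precedes it below -/
import Mathlib

section
/- Identifiability of the directed SBM: let n ≥ 2Q, let (α, π) and (α', π') be SBM parameters with Q classes such that α_q > 0 and α'_q > 0 for every q, and such that the Q coordinates of the vector r = π·α are pairwise distinct (and likewise for r' = π'·α'). If the two parameter pairs induce the same probability distribution on the adjacency matrix X_{[n]} = (X_{i,j})_{1≤i≠j≤n} of the SBM with n vertices, then there exists a permutation σ of {1,…,Q} with α'_q = α_{σ(q)} and π'_{q,l} = π_{σ(q),σ(l)} for all q, l; i.e., the parameters are identifiable up to label switching. -/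
/-!
The law of `X` determines, for every loopless digraph `E`, the probability that all edges of
`E` are present. For the double star with edges `i₀ → i₁`, `a` edges out of `i₀` and `b` edges
out of `i₁` towards distinct further vertices, this probability is
`Σ_{q,l} α_q α_l π_{ql} r_q^a r_l^b` with `r = π·α`; for `b = 0` it is the moment
`Σ_q α_q r_q^(a+1)` of the measure `Σ_q α_q δ_{r_q}`. A measure with `Q` atoms is determined by
its moments of order `< 2Q`, which gives `α` and `r` up to a permutation `σ`. As the `r_q` are
distinct, a Vandermonde matrix is invertible, and the double stars with `a, b < Q` then give
`α_q α_l π_{ql}`. All these graphs have at most `2Q` vertices.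
-/

open scoped Classical
open Finset

/-- The probability that the adjacency matrix of the directed binary SBM with `n`
vertices, `Q` classes, class proportions `α` and connectivity matrix `π` equals `x`:
`P(X = x) = Σ_z (Π_i α_{z_i}) Π_{i≠j} π_{z_i,z_j}^{x_{i,j}} (1−π_{z_i,z_j})^{1−x_{i,j}}`. -/
noncomputable def sbmProb (Q n : ℕ) (α : Fin Q → ℝ) (π : Fin Q → Fin Q → ℝ)
    (x : Fin n → Fin n → Bool) : ℝ :=
  ∑ z : Fin n → Fin Q, (∏ i, α (z i)) *
    ∏ i : Fin n, ∏ j : Fin n,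
      if i = j then 1 else (if x i j then π (z i) (z j) else 1 - π (z i) (z j))

lemma sum_prod_prod_eq_prod_prod_sum {ι κ β : Type*} [Fintype ι] [DecidableEq ι] [Fintype κ]
    [DecidableEq κ] [Fintype β] (g : ι → κ → β → ℝ) :
    ∑ x : ι → κ → β, ∏ i, ∏ j, g i j (x i j) = ∏ i, ∏ j, ∑ b, g i j b := by
  simp_rw [Fintype.prod_sum]

lemma prod_mem_eq_prod_prod_ite {α β M : Type*} [Fintype α] [Fintype β] [CommMonoid M]
    (E : Finset (α × β)) (f : α × β → M) :
    ∏ e ∈ E, f e = ∏ a, ∏ b, if (a, b) ∈ E then f (a, b) else 1 := by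
  rw [← Fintype.prod_prod_type (fun e => if e ∈ E then f e else 1), prod_ite_mem,
    univ_inter]

-- The probability that every edge of `E` is present.
noncomputable def edgeMoment {Q n : ℕ} (α : Fin Q → ℝ) (π : Fin Q → Fin Q → ℝ)
    (E : Finset (Fin n × Fin n)) : ℝ :=
  ∑ z : Fin n → Fin Q, (∏ i, α (z i)) * ∏ e ∈ E, π (z e.1) (z e.2)

-- `x` ranges over all Boolean matrices and `sbmProb` ignores the diagonal, hence `2 ^ n`.
lemma sum_sbmProb_mul_prod_edges {Q n : ℕ} (α : Fin Q → ℝ) (π : Fin Q → Fin Q → ℝ)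
    (E : Finset (Fin n × Fin n)) (hE : ∀ e ∈ E, e.1 ≠ e.2) :
    ∑ x : Fin n → Fin n → Bool, sbmProb Q n α π x * ∏ e ∈ E, (if x e.1 e.2 then 1 else 0)
      = 2 ^ n * edgeMoment α π E := by
  have hsum : ∀ (z : Fin n → Fin Q) (i j : Fin n),
      ∑ b : Bool, (if i = j then 1 else if b then π (z i) (z j) else 1 - π (z i) (z j)) *
          (if (i, j) ∈ E then (if b then 1 else 0) else 1)
        = (if i = j then 2 else 1) * (if (i, j) ∈ E then π (z i) (z j) else 1) := by
    intro z i j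
    by_cases hij : i = j
    · subst hij
      simp [show (i, i) ∉ E from fun h => hE _ h rfl]
    · by_cases he : (i, j) ∈ E <;> simp [hij, he]
  have hdiag : ∏ i : Fin n, ∏ j : Fin n, (if i = j then (2 : ℝ) else 1) = 2 ^ n := by
    simp
  unfold sbmProb edgeMoment
  simp_rw [sum_mul, mul_sum]
  rw [sum_comm]
  refine sum_congr rfl fun z _ => ?_
  simp_rw [mul_assoc, ← mul_sum]
  rw [mul_left_comm]
  congr 1
  simp_rw [prod_mem_eq_prod_prod_ite E, ← prod_mul_distrib]
  rw [sum_prod_prod_eq_prod_prod_sum fun i j (b : Bool) =>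
    (if i = j then 1 else if b then π (z i) (z j) else 1 - π (z i) (z j)) *
      (if (i, j) ∈ E then (if b then 1 else 0) else 1)]
  simp_rw [hsum, prod_mul_distrib, hdiag]

lemma edgeMoment_eq_of_sbmProb_eq {Q n : ℕ} {α α' : Fin Q → ℝ} {π π' : Fin Q → Fin Q → ℝ}
    (heq : ∀ x, sbmProb Q n α π x = sbmProb Q n α' π' x) {E : Finset (Fin n × Fin n)}
    (hE : ∀ e ∈ E, e.1 ≠ e.2) :
    edgeMoment α π E = edgeMoment α' π' E := by
  have h := sum_sbmProb_mul_prod_edges α π E hE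
  simp_rw [heq, sum_sbmProb_mul_prod_edges α' π' E hE] at h
  exact (mul_left_cancel₀ (pow_ne_zero n two_ne_zero) h).symm

lemma sum_mul_prod_eq_sum_sum_pinned {ι κ : Type*} [Fintype ι] [DecidableEq ι] [Fintype κ]
    [DecidableEq κ] {i₀ i₁ : ι} (h : i₀ ≠ i₁) (F : κ → κ → ℝ) (f : κ → κ → ι → κ → ℝ) :
    ∑ z : ι → κ, F (z i₀) (z i₁) * ∏ i, f (z i₀) (z i₁) i (z i)
      = ∑ q, ∑ l, F q l *
          ∏ i, if i = i₀ then f q l i q else if i = i₁ then f q l i l else ∑ c, f q l i c := by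
  let g (q l : κ) (i : ι) (c : κ) : ℝ :=
    if (i = i₀ ∧ c ≠ q) ∨ (i = i₁ ∧ c ≠ l) then 0 else f q l i c
  have hpin : ∀ z : ι → κ, F (z i₀) (z i₁) * ∏ i, f (z i₀) (z i₁) i (z i)
      = ∑ q, ∑ l, F q l * ∏ i, g q l i (z i) := by
    intro z
    rw [Fintype.sum_eq_single (z i₀), Fintype.sum_eq_single (z i₁)]
    · congr 1
      refine prod_congr rfl fun i _ => ?_
      simp only [g]
      split_ifs with hi
      · rcases hi with ⟨rfl, hi⟩ | ⟨rfl, hi⟩ <;> exact absurd rfl hi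
      · rfl
    · intro l hl
      rw [prod_eq_zero (mem_univ i₁) (by simp [g, Ne.symm hl]), mul_zero]
    · intro q hq
      refine sum_eq_zero fun l _ => ?_
      rw [prod_eq_zero (mem_univ i₀) (by simp [g, Ne.symm hq]), mul_zero]
  have hfactor : ∀ q l i, ∑ c, g q l i c
      = if i = i₀ then f q l i q else if i = i₁ then f q l i l else ∑ c, f q l i c := by
    intro q l i
    by_cases h₀ : i = i₀
    · subst h₀; simp [g, h]
    · by_cases h₁ : i = i₁
      · subst h₁; simp [g, h₀]
      · simp [g, h₀, h₁]
  simp_rw [hpin]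
  rw [sum_comm]
  refine sum_congr rfl fun q _ => ?_
  rw [sum_comm]
  refine sum_congr rfl fun l _ => ?_
  rw [← mul_sum, ← Fintype.prod_sum (g q l)]
  simp_rw [hfactor]

def doubleStar {n : ℕ} (i₀ i₁ : Fin n) (A B : Finset (Fin n)) : Finset (Fin n × Fin n) :=
  {(i₀, i₁)} ∪ {i₀} ×ˢ A ∪ {i₁} ×ˢ B

lemma ne_of_mem_doubleStar {n : ℕ} {i₀ i₁ : Fin n} {A B : Finset (Fin n)} (h : i₀ ≠ i₁)
    (hA₀ : i₀ ∉ A) (hB₁ : i₁ ∉ B) : ∀ e ∈ doubleStar i₀ i₁ A B, e.1 ≠ e.2 := by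
  simp only [doubleStar, mem_union, mem_singleton, mem_product]
  rintro ⟨i, j⟩ ((⟨rfl, rfl⟩ | ⟨rfl, hj⟩) | ⟨rfl, hj⟩)
  · exact h
  · exact fun hij => hA₀ (hij ▸ hj)
  · exact fun hij => hB₁ (hij ▸ hj)

lemma prod_doubleStar {M : Type*} [CommMonoid M] {n : ℕ} {i₀ i₁ : Fin n} {A B : Finset (Fin n)}
    (h : i₀ ≠ i₁) (hA : i₁ ∉ A) (f : Fin n × Fin n → M) :
    ∏ e ∈ doubleStar i₀ i₁ A B, f e
      = f (i₀, i₁) * (∏ j ∈ A, f (i₀, j)) * ∏ j ∈ B, f (i₁, j) := by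
  rw [doubleStar, prod_union, prod_union, prod_singleton,
    prod_product, prod_product, prod_singleton, prod_singleton]
  · simp [hA]
  · rw [disjoint_union_left]
    constructor
    · simp [Ne.symm h]
    · exact disjoint_product.mpr (Or.inl (disjoint_singleton.mpr h))

noncomputable def doubleStarMoment {Q : ℕ} (α : Fin Q → ℝ) (π : Fin Q → Fin Q → ℝ) (a b : ℕ) : ℝ :=
  ∑ q, ∑ l, α q * α l * π q l * (π q ⬝ᵥ α) ^ a * (π l ⬝ᵥ α) ^ b

lemma edgeMoment_doubleStar {Q n : ℕ} (α : Fin Q → ℝ) (π : Fin Q → Fin Q → ℝ)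
    (hα : ∑ q, α q = 1) {i₀ i₁ : Fin n} {A B : Finset (Fin n)} (h : i₀ ≠ i₁)
    (hA₀ : i₀ ∉ A) (hA₁ : i₁ ∉ A) (hB₀ : i₀ ∉ B) (hB₁ : i₁ ∉ B) (hAB : Disjoint A B) :
    edgeMoment α π (doubleStar i₀ i₁ A B) = doubleStarMoment α π #A #B := by
  have hsplit : ∀ z : Fin n → Fin Q,
      (∏ i, α (z i)) * ∏ e ∈ doubleStar i₀ i₁ A B, π (z e.1) (z e.2)
        = π (z i₀) (z i₁) * ∏ i, (α (z i) * (if i ∈ A then π (z i₀) (z i) else 1)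
            * (if i ∈ B then π (z i₁) (z i) else 1)) := by
    intro z
    simp_rw [prod_doubleStar h hA₁, prod_mul_distrib, prod_ite_mem,
      univ_inter]
    ring
  have hfactor : ∀ q l i, (if i = i₀ then α q * (if i ∈ A then π q q else 1)
        * (if i ∈ B then π l q else 1)
      else if i = i₁ then α l * (if i ∈ A then π q l else 1) * (if i ∈ B then π l l else 1)
      else ∑ c, α c * (if i ∈ A then π q c else 1) * (if i ∈ B then π l c else 1))
      = (if i = i₀ then α q else 1) * (if i = i₁ then α l else 1)
        * (if i ∈ A then π q ⬝ᵥ α else 1) * (if i ∈ B then π l ⬝ᵥ α else 1) := by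
    intro q l i
    by_cases h₀ : i = i₀
    · subst h₀; simp [h, hA₀, hB₀]
    by_cases h₁ : i = i₁
    · subst h₁; simp [Ne.symm h, hA₁, hB₁]
    by_cases hiA : i ∈ A
    · simp [h₀, h₁, hiA, disjoint_left.mp hAB hiA, dotProduct, mul_comm]
    by_cases hiB : i ∈ B
    · simp [h₀, h₁, hiA, hiB, dotProduct, mul_comm]
    · simp [h₀, h₁, hiA, hiB, hα]
  unfold edgeMoment doubleStarMoment
  simp_rw [hsplit]
  rw [sum_mul_prod_eq_sum_sum_pinned h π fun q l i c =>
    α c * (if i ∈ A then π q c else 1) * (if i ∈ B then π l c else 1)]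
  simp_rw [hfactor, prod_mul_distrib, Fintype.prod_ite_eq', prod_ite_mem,
    univ_inter, prod_const]
  exact sum_congr rfl fun q _ => sum_congr rfl fun l _ => by ring

lemma exists_disjoint_leaves {n : ℕ} {i₀ i₁ : Fin n} (h : i₀ ≠ i₁) {a b : ℕ}
    (hab : a + b + 2 ≤ n) :
    ∃ A B : Finset (Fin n), i₀ ∉ A ∧ i₁ ∉ A ∧ i₀ ∉ B ∧ i₁ ∉ B ∧ Disjoint A B ∧
      #A = a ∧ #B = b := by
  obtain ⟨C, hCS, hC⟩ := exists_subset_card_eq (s := univ \ {i₀, i₁}) (n := a + b)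
    (by rw [card_sdiff_of_subset (subset_univ _), card_pair h]; simp; omega)
  obtain ⟨A, hAC, hA⟩ := exists_subset_card_eq (s := C) (n := a) (by omega)
  have hC₀ : i₀ ∉ C := fun hi => by simpa using hCS hi
  have hC₁ : i₁ ∉ C := fun hi => by simpa using hCS hi
  refine ⟨A, C \ A, fun hi => hC₀ (hAC hi), fun hi => hC₁ (hAC hi),
    fun hi => hC₀ (sdiff_subset hi), fun hi => hC₁ (sdiff_subset hi),
    disjoint_sdiff, hA, ?_⟩
  rw [card_sdiff_of_subset hAC]
  omega

lemma doubleStarMoment_eq_of_sbmProb_eq {Q n : ℕ} {α α' : Fin Q → ℝ} {π π' : Fin Q → Fin Q → ℝ}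
    (hα : ∑ q, α q = 1) (hα' : ∑ q, α' q = 1)
    (heq : ∀ x, sbmProb Q n α π x = sbmProb Q n α' π' x) {a b : ℕ} (hab : a + b + 2 ≤ n) :
    doubleStarMoment α π a b = doubleStarMoment α' π' a b := by
  let i₀ : Fin n := ⟨0, by omega⟩
  let i₁ : Fin n := ⟨1, by omega⟩
  have h : i₀ ≠ i₁ := by simp [i₀, i₁, Fin.ext_iff]
  obtain ⟨A, B, hA₀, hA₁, hB₀, hB₁, hAB, rfl, rfl⟩ := exists_disjoint_leaves h hab
  rw [← edgeMoment_doubleStar α π hα h hA₀ hA₁ hB₀ hB₁ hAB,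
    ← edgeMoment_doubleStar α' π' hα' h hA₀ hA₁ hB₀ hB₁ hAB]
  exact edgeMoment_eq_of_sbmProb_eq heq (ne_of_mem_doubleStar h hA₀ hB₁)

lemma doubleStarMoment_zero_right {Q : ℕ} (α : Fin Q → ℝ) (π : Fin Q → Fin Q → ℝ) (a : ℕ) :
    doubleStarMoment α π a 0 = ∑ q, α q * (π q ⬝ᵥ α) ^ (a + 1) := by
  simp only [doubleStarMoment, dotProduct, pow_zero, mul_one, pow_succ, mul_sum]
  exact sum_congr rfl fun q _ => sum_congr rfl fun l _ => by ring

section Moments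
open Polynomial

lemma sum_mul_eval_eq_of_moments_eq {ι ι' : Type*} [Fintype ι] [Fintype ι'] {N : ℕ}
    {w x : ι → ℝ} {w' x' : ι' → ℝ}
    (h : ∀ k < N, ∑ i, w i * x i ^ k = ∑ i, w' i * x' i ^ k) {p : ℝ[X]} (hp : p.natDegree < N) :
    ∑ i, w i * p.eval (x i) = ∑ i, w' i * p.eval (x' i) := by
  simp_rw [eval_eq_sum_range' hp, mul_sum]
  rw [sum_comm, sum_comm (s := univ)]
  refine sum_congr rfl fun k hk => ?_
  simp_rw [mul_left_comm (w _), mul_left_comm (w' _), ← mul_sum]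
  rw [h k (mem_range.mp hk)]

lemma exists_eq_of_moments_eq {Q : ℕ} {α α' r r' : Fin Q → ℝ} (hα' : ∀ q, α' q ≠ 0)
    (hr' : Function.Injective r')
    (h : ∀ k < 2 * Q, ∑ q, α q * r q ^ k = ∑ q, α' q * r' q ^ k) (q' : Fin Q) :
    ∃ q, r' q' = r q := by
  -- `P * L` vanishes at every `r q`, and at every `r' q` except `r' q'`.
  let P : ℝ[X] := ∏ q, (X - C (r q))
  let L : ℝ[X] := Lagrange.basis univ r' q'
  have hdeg : (P * L).natDegree < 2 * Q := by
    have hP : P.natDegree = Q := by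
      simp [P, natDegree_prod _ _ fun q _ => X_sub_C_ne_zero (r q)]
    have hL : L.natDegree = Q - 1 := by
      simp [L, Lagrange.natDegree_basis hr'.injOn (mem_univ q')]
    have := natDegree_mul_le (p := P) (q := L)
    have : 0 < Q := Fin.pos q'
    omega
  have hPr : ∀ q, P.eval (r q) = 0 := fun q => by
    simp only [P, eval_prod, eval_sub, eval_X, eval_C]
    exact prod_eq_zero (mem_univ q) (sub_self _)
  have hsum := sum_mul_eval_eq_of_moments_eq h hdeg
  simp only [eval_mul, hPr, zero_mul, mul_zero, sum_const_zero] at hsum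
  rw [Fintype.sum_eq_single q' fun q hq => by
    rw [Lagrange.eval_basis_of_ne (Ne.symm hq) (mem_univ q), mul_zero, mul_zero]] at hsum
  rw [Lagrange.eval_basis_self hr'.injOn (mem_univ q'), mul_one] at hsum
  have hP0 : P.eval (r' q') = 0 := (mul_eq_zero.mp hsum.symm).resolve_left (hα' q')
  simp only [P, eval_prod, eval_sub, eval_X, eval_C] at hP0
  obtain ⟨q, -, hq⟩ := prod_eq_zero_iff.mp hP0
  exact ⟨q, sub_eq_zero.mp hq⟩

end Moments

lemma exists_perm_of_moments_eq {Q : ℕ} {α α' r r' : Fin Q → ℝ} (hα' : ∀ q, α' q ≠ 0)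
    (hr : Function.Injective r) (hr' : Function.Injective r')
    (h : ∀ k < 2 * Q, ∑ q, α q * r q ^ k = ∑ q, α' q * r' q ^ k) :
    ∃ σ : Equiv.Perm (Fin Q), (∀ q, α' q = α (σ q)) ∧ ∀ q, r' q = r (σ q) := by
  choose τ hτ using exists_eq_of_moments_eq hα' hr' h
  have hτ_inj : Function.Injective τ := fun a b hab => hr' (by rw [hτ a, hτ b, hab])
  let σ := Equiv.ofBijective τ hτ_inj.bijective_of_finite
  refine ⟨σ, fun q => ?_, hτ⟩
  have hzero : (fun q => α q - α' (σ.symm q)) = 0 := by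
    refine Matrix.eq_zero_of_forall_pow_sum_mul_pow_eq_zero hr fun k => ?_
    have hshift : ∑ q, α' (σ.symm q) * r q ^ (k : ℕ) = ∑ q, α' q * r' q ^ (k : ℕ) := by
      rw [← Equiv.sum_comp σ]
      simp [σ, hτ]
    simp only [sub_mul, sum_sub_distrib, hshift, h k (by omega), sub_self]
  have := congrFun hzero (σ q)
  simp only [Equiv.symm_apply_apply, Pi.zero_apply, sub_eq_zero] at this
  exact this.symm

lemma eq_of_forall_sum_sum_pow_eq {Q : ℕ} {r : Fin Q → ℝ} (hr : Function.Injective r)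
    {M N : Fin Q → Fin Q → ℝ}
    (h : ∀ a b : Fin Q, ∑ q, ∑ l, M q l * r q ^ (a : ℕ) * r l ^ (b : ℕ)
      = ∑ q, ∑ l, N q l * r q ^ (a : ℕ) * r l ^ (b : ℕ)) :
    M = N := by
  have hcol : ∀ a : Fin Q, (fun l => ∑ q, (M q l - N q l) * r q ^ (a : ℕ)) = 0 := fun a =>
    Matrix.eq_zero_of_forall_pow_sum_mul_pow_eq_zero hr fun b => by
      simp_rw [sum_mul, sub_mul, sum_sub_distrib]
      rw [sum_comm, sum_comm (f := fun x y => N y x * _ * _), h a b, sub_self]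
  funext q l
  have := Matrix.eq_zero_of_forall_pow_sum_mul_pow_eq_zero hr fun a => congrFun (hcol a) l
  exact sub_eq_zero.mp (congrFun this q)

lemma eq_perm_of_doubleStarMoment_eq {Q : ℕ} {α α' : Fin Q → ℝ} {π π' : Fin Q → Fin Q → ℝ}
    (hα' : ∀ q, α' q ≠ 0) (hr' : Function.Injective fun q => π' q ⬝ᵥ α')
    (σ : Equiv.Perm (Fin Q)) (hσα : ∀ q, α' q = α (σ q))
    (hσr : ∀ q, π' q ⬝ᵥ α' = π (σ q) ⬝ᵥ α)
    (h : ∀ a < Q, ∀ b < Q, doubleStarMoment α π a b = doubleStarMoment α' π' a b) (q l : Fin Q) :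
    π' q l = π (σ q) (σ l) := by
  have hM := eq_of_forall_sum_sum_pow_eq hr' (M := fun q l => α' q * α' l * π (σ q) (σ l))
    (N := fun q l => α' q * α' l * π' q l) fun a b => by
      rw [← doubleStarMoment, ← h a a.isLt b b.isLt, doubleStarMoment]
      simp only [hσα, hσr]
      exact Fintype.sum_equiv σ _ _ fun q => Fintype.sum_equiv σ _ _ fun l => rfl
  exact (mul_left_cancel₀ (mul_ne_zero (hα' q) (hα' l)) (congrFun (congrFun hM q) l)).symm

theorem sbm_identifiable_general
    (Q n : ℕ) (hn : 2 * Q ≤ n)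
    (α α' : Fin Q → ℝ) (π π' : Fin Q → Fin Q → ℝ)
    (hαsum : ∑ q, α q = 1)
    (hα' : ∀ q, 0 < α' q) (hα'sum : ∑ q, α' q = 1)
    (hr : Function.Injective fun q => ∑ l, π q l * α l)
    (hr' : Function.Injective fun q => ∑ l, π' q l * α' l)
    (heq : ∀ x : Fin n → Fin n → Bool, sbmProb Q n α π x = sbmProb Q n α' π' x) :
    ∃ σ : Equiv.Perm (Fin Q), (∀ q, α' q = α (σ q)) ∧ ∀ q l, π' q l = π (σ q) (σ l) := by
  have hmoment {a b : ℕ} (hab : a + b + 2 ≤ n) :=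
    doubleStarMoment_eq_of_sbmProb_eq hαsum hα'sum heq hab
  have hstar : ∀ k < 2 * Q, ∑ q, α q * (π q ⬝ᵥ α) ^ k = ∑ q, α' q * (π' q ⬝ᵥ α') ^ k := by
    rintro (_ | k) hk
    · simp [hαsum, hα'sum]
    · simpa only [doubleStarMoment_zero_right] using hmoment (a := k) (b := 0) (by omega)
  have hα'0 : ∀ q, α' q ≠ 0 := fun q => (hα' q).ne'
  obtain ⟨σ, hσα, hσr⟩ := exists_perm_of_moments_eq hα'0 hr hr' hstar
  exact ⟨σ, hσα, eq_perm_of_doubleStarMoment_eq hα'0 hr' σ hσα hσr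
    fun a ha b hb => hmoment (by omega)⟩

/-- Identifiability of the directed SBM (up to label switching) when `n ≥ 2Q`,
all group proportions are positive and the coordinates of `r = π·α` are pairwise
distinct (and likewise for the second parameter pair). -/
theorem sbm_identifiable
    (Q n : ℕ) (hQ : 0 < Q) (hn : 2 * Q ≤ n)
    (α α' : Fin Q → ℝ) (π π' : Fin Q → Fin Q → ℝ)
    (hα : ∀ q, 0 < α q) (hαsum : ∑ q, α q = 1)
    (hα' : ∀ q, 0 < α' q) (hα'sum : ∑ q, α' q = 1)
    (hπ : ∀ q l, π q l ∈ Set.Icc (0:ℝ) 1) (hπ' : ∀ q l, π' q l ∈ Set.Icc (0:ℝ) 1)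
    (hr : Function.Injective fun q => ∑ l, π q l * α l)
    (hr' : Function.Injective fun q => ∑ l, π' q l * α' l)
    (heq : ∀ x : Fin n → Fin n → Bool, sbmProb Q n α π x = sbmProb Q n α' π' x) :
    ∃ σ : Equiv.Perm (Fin Q), (∀ q, α' q = α (σ q)) ∧ ∀ q l, π' q l = π (σ q) (σ l) :=
  sbm_identifiable_general Q n hn α α' π π' hαsum hα' hα'sum hr hr' heq
end

section
/- Uniform convergence of the normalized conditional log-likelihood: assume (A1) and (A2) hold for π*, and condition on the true labels Z = z*. Define φ_n(z_{[n]}, π) = (n(n−1))^{−1} L1(X_{[n]}; z_{[n]}, π) and Φ_n(z_{[n]}, π) = E[φ_n(z_{[n]}, π) | Z_{[n]} = z*_{[n]}], and let 𝒫 be the set of pairs (z_{[n]}, π) such that π satisfies (A1) and (A2) and Φ_n(z_{[n]}, π) is finite (equivalently, whenever π_{z_i,z_j} ∈ {0,1} then π*_{z*_i,z*_j} = π_{z_i,z_j}). Then sup_{(z_{[n]},π) ∈ 𝒫} |φ_n(z_{[n]}, π) − Φ_n(z_{[n]}, π)| → 0 in probability as n → ∞, uniformly with respect to z*. -/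
open scoped Classical
open Finset Filter MeasureTheory

/-- Product of Bernoulli masses: the conditional probability `P(X = x | Z = z)` in the
directed binary SBM (diagonal terms are ignored). -/
noncomputable def bernW {Q n : ℕ} (π : Fin Q → Fin Q → ℝ) (z : Fin n → Fin Q)
    (x : Fin n → Fin n → Bool) : ℝ :=
  ∏ i : Fin n, ∏ j : Fin n,
    if i = j then 1 else (if x i j then π (z i) (z j) else 1 - π (z i) (z j))

/-- Unnormalized posterior weight of the label vector `z` given the adjacency matrix `x`:
`(Π_i α_{z_i}) · Π_{i≠j} π_{z_i,z_j}^{x_{i,j}}(1−π_{z_i,z_j})^{1−x_{i,j}}`; this is also the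
joint SBM probability `P(Z = z, X = x)`. -/
noncomputable def postW {Q n : ℕ} (α : Fin Q → ℝ) (π : Fin Q → Fin Q → ℝ)
    (x : Fin n → Fin n → Bool) (z : Fin n → Fin Q) : ℝ :=
  (∏ i : Fin n, α (z i)) * bernW π z x

/-- The conditional law `P* = P(· | Z = z*)` of the adjacency matrix, as a probability
of an event `E`. -/
noncomputable def condProb {Q n : ℕ} (π : Fin Q → Fin Q → ℝ) (zs : Fin n → Fin Q)
    (E : Set (Fin n → Fin n → Bool)) : ℝ :=
  ∑ x : Fin n → Fin n → Bool, if x ∈ E then bernW π zs x else 0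

/-- The unconditional SBM law `ℙ` of the pair (labels, adjacency matrix), as a
probability of an event `E`. -/
noncomputable def jointProb {Q n : ℕ} (α : Fin Q → ℝ) (π : Fin Q → Fin Q → ℝ)
    (E : Set ((Fin n → Fin Q) × (Fin n → Fin n → Bool))) : ℝ :=
  ∑ z : Fin n → Fin Q, ∑ x : Fin n → Fin n → Bool,
    if (z, x) ∈ E then postW α π x z else 0

/-- Assumption (A1): no two distinct classes have simultaneously equal rows and columns. -/
def A1 {Q : ℕ} (π : Fin Q → Fin Q → ℝ) : Prop :=
  ∀ q q' : Fin Q, q ≠ q' → ∃ l, π q l ≠ π q' l ∨ π l q ≠ π l q'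

/-- Assumption (A2): every entry of `π` lying in `(0,1)` lies in `[ζ, 1−ζ]`. -/
def A2 {Q : ℕ} (ζ : ℝ) (π : Fin Q → Fin Q → ℝ) : Prop :=
  ∀ q l, π q l ∈ Set.Ioo (0:ℝ) 1 → π q l ∈ Set.Icc ζ (1 - ζ)

/-- Assumption (A3): all group proportions lie in `[γ, 1−γ]`. -/
def A3 {Q : ℕ} (γ : ℝ) (α : Fin Q → ℝ) : Prop :=
  ∀ q, α q ∈ Set.Icc γ (1 - γ)

/-- `α` is a probability vector. -/
def ProbVec {Q : ℕ} (α : Fin Q → ℝ) : Prop := (∀ q, 0 ≤ α q) ∧ ∑ q, α q = 1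

/-- All entries of `π` lie in `[0,1]`. -/
def MatIcc {Q : ℕ} (π : Fin Q → Fin Q → ℝ) : Prop := ∀ q l, π q l ∈ Set.Icc (0:ℝ) 1

/-- `π`-equivalence of label vectors: equality up to a permutation of the classes
leaving `π` invariant. -/
def piEquiv {Q n : ℕ} (π : Fin Q → Fin Q → ℝ) (z z' : Fin n → Fin Q) : Prop :=
  ∃ σ : Equiv.Perm (Fin Q), (∀ q l, π (σ q) (σ l) = π q l) ∧ ∀ i, z' i = σ (z i)
/-- Conditional log-likelihood `L1(X; z, π)` of the labels `z` and connectivity `π`. -/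
noncomputable def L1 {Q n : ℕ} (x : Fin n → Fin n → Bool) (z : Fin n → Fin Q)
    (π : Fin Q → Fin Q → ℝ) : ℝ :=
  ∑ i : Fin n, ∑ j : Fin n, if i = j then 0 else
    (if x i j then Real.log (π (z i) (z j)) else Real.log (1 - π (z i) (z j)))

/-- Conditional expectation of `L1(X; z, π)` given `Z_{[n]} = z*` (unnormalized):
`Σ_{i≠j} [π*_{z*_i,z*_j} log π_{z_i,z_j} + (1−π*_{z*_i,z*_j}) log(1−π_{z_i,z_j})]`. -/
noncomputable def PhiL1 {Q n : ℕ} (πs : Fin Q → Fin Q → ℝ) (zs : Fin n → Fin Q)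
    (z : Fin n → Fin Q) (π : Fin Q → Fin Q → ℝ) : ℝ :=
  ∑ i : Fin n, ∑ j : Fin n, if i = j then 0 else
    (πs (zs i) (zs j) * Real.log (π (z i) (z j))
      + (1 - πs (zs i) (zs j)) * Real.log (1 - π (z i) (z j)))


/-!
For fixed `(z, π)`, `L1 - PhiL1` is linear in the centred edges `X_{ij} - π*_{z*_i z*_j}` and
groups by blocks: it equals `Σ_{(q,l)} (log π_{ql} - log (1 - π_{ql})) S_{z,q,l}`, where
`S_{z,q,l}` is the centred number of edges from class `q` to class `l` under `z`. By (A2) the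
log-odds are bounded by `2 |log ζ|`, so a deviation `η` of `φ_n` from `Φ_n` forces
`|S_{z,q,l}| ≥ K n(n-1)` for one of the `Q^{n+2}` triples `(z, q, l)`, with `K` independent
of `n`. Each `S_{z,q,l}` is a sum of independent bounded centred variables, so a Chernoff bound
gives it probability at most `2^{n+1} exp(-K² n(n-1)/2)`; this Gaussian decay in `n²` absorbs
the union bound over the `Q^{n+2}` triples.
-/

open Topology
open Real (cosh cosh_eq cosh_le_exp_half_sq exp exp_add exp_le_exp exp_nat_mul exp_pos exp_sum
  log log_le_log log_nonpos one_le_exp rpow_def_of_pos rpow_natCast tendsto_exp_atBot)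

lemma exp_mul_le_of_abs_le_one {u y : ℝ} (hy : |y| ≤ 1) :
    exp (u * y) ≤ (1 + y) / 2 * exp u + (1 - y) / 2 * exp (-u) := by
  obtain ⟨hy₁, hy₂⟩ := abs_le.mp hy
  have h := convexOn_exp.2 (Set.mem_univ u) (Set.mem_univ (-u))
    (by linarith : 0 ≤ (1 + y) / 2) (by linarith : 0 ≤ (1 - y) / 2) (by ring)
  simp only [smul_eq_mul] at h
  calc exp (u * y) = exp ((1 + y) / 2 * u + (1 - y) / 2 * -u) := by ring_nf
    _ ≤ _ := h

-- Hoeffding's lemma for a Bernoulli variable, with the crude constant `1/2` instead of `1/8`.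
lemma bernoulli_mgf_le {p : ℝ} (hp : p ∈ Set.Icc (0 : ℝ) 1) (u : ℝ) :
    p * exp (u * (1 - p)) + (1 - p) * exp (u * (0 - p)) ≤ exp (u ^ 2 / 2) := by
  obtain ⟨hp₀, hp₁⟩ := hp
  have h₁ := mul_le_mul_of_nonneg_left
    (exp_mul_le_of_abs_le_one (u := u) (abs_le.mpr ⟨by linarith, by linarith⟩ : |1 - p| ≤ 1)) hp₀
  have h₂ := mul_le_mul_of_nonneg_left
    (exp_mul_le_of_abs_le_one (u := u) (abs_le.mpr ⟨by linarith, by linarith⟩ : |0 - p| ≤ 1))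
    (sub_nonneg.mpr hp₁)
  calc _ ≤ cosh u := by rw [cosh_eq]; linarith
    _ ≤ exp (u ^ 2 / 2) := cosh_le_exp_half_sq u

lemma sum_ite_ge_le_exp_mul_sum {α : Type*} [Fintype α] {w S : α → ℝ} (hw : ∀ x, 0 ≤ w x)
    {s t : ℝ} (ht : 0 ≤ t) :
    ∑ x, (if s ≤ S x then w x else 0) ≤ exp (-(t * s)) * ∑ x, w x * exp (t * S x) := by
  rw [Finset.mul_sum]
  refine Finset.sum_le_sum fun x _ => ?_
  split_ifs with h
  · rw [mul_left_comm, ← exp_add]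
    exact le_mul_of_one_le_right (hw x) (one_le_exp (by nlinarith))
  · exact mul_nonneg (exp_pos _).le (mul_nonneg (hw x) (exp_pos _).le)

lemma tendsto_pow_mul_exp_neg_mul_atTop {a c : ℝ} (ha : 0 < a) (hc : 0 < c) :
    Tendsto (fun n : ℕ => a ^ n * exp (-(c * ((n : ℝ) * ((n : ℝ) - 1))))) atTop (𝓝 0) := by
  have hexp : Tendsto (fun n : ℕ => (n : ℝ) * (log a - c * ((n : ℝ) - 1))) atTop atBot := by
    refine tendsto_natCast_atTop_atTop.atTop_mul_atBot₀ ?_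
    refine tendsto_atBot_add_const_left _ _ ?_
    exact tendsto_neg_atTop_atBot.comp
      ((tendsto_atTop_add_const_right _ _ tendsto_natCast_atTop_atTop).const_mul_atTop hc)
  refine (tendsto_exp_atBot.comp hexp).congr fun n => ?_
  simp only [Function.comp_apply]
  rw [← rpow_natCast, rpow_def_of_pos ha, ← exp_add]
  ring_nf

section EdgeDeviation

variable {Q n : ℕ} {π : Fin Q → Fin Q → ℝ}

noncomputable def edgeDeviation (π : Fin Q → Fin Q → ℝ) (z : Fin n → Fin Q)
    (c : Fin n → Fin n → ℝ) (x : Fin n → Fin n → Bool) : ℝ :=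
  ∑ i, ∑ j, c i j * ((if x i j then 1 else 0) - π (z i) (z j))

lemma edgeDeviation_neg (z : Fin n → Fin Q) (c : Fin n → Fin n → ℝ) (x : Fin n → Fin n → Bool) :
    edgeDeviation π z (-c) x = -edgeDeviation π z c x := by
  simp [edgeDeviation, ← Finset.sum_neg_distrib]

lemma bernW_nonneg (hπ : MatIcc π) (z : Fin n → Fin Q) (x : Fin n → Fin n → Bool) :
    0 ≤ bernW π z x := by
  refine Finset.prod_nonneg fun i _ => Finset.prod_nonneg fun j _ => ?_
  obtain ⟨h₀, h₁⟩ := hπ (z i) (z j)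
  split_ifs <;> linarith

lemma condProb_mono (hπ : MatIcc π) (z : Fin n → Fin Q) {E F : Set (Fin n → Fin n → Bool)}
    (h : E ⊆ F) : condProb π z E ≤ condProb π z F := by
  refine Finset.sum_le_sum fun x _ => ?_
  have := bernW_nonneg hπ z x
  split_ifs with hE hF
  · exact le_rfl
  · exact absurd (h hE) hF
  · exact this
  · exact le_rfl

lemma condProb_iUnion_le {ι : Type*} [Fintype ι] (hπ : MatIcc π) (z : Fin n → Fin Q)
    (E : ι → Set (Fin n → Fin n → Bool)) :
    condProb π z (⋃ k, E k) ≤ ∑ k, condProb π z (E k) := by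
  simp only [condProb]
  rw [Finset.sum_comm]
  refine Finset.sum_le_sum fun x _ => ?_
  have hw := bernW_nonneg hπ z x
  have hnn : ∀ k, 0 ≤ if x ∈ E k then bernW π z x else 0 := fun k => by split_ifs <;> simp [hw]
  split_ifs with hx
  · obtain ⟨k, hk⟩ := Set.mem_iUnion.mp hx
    exact (if_pos hk).symm.le.trans (Finset.single_le_sum (fun k _ => hnn k) (Finset.mem_univ k))
  · exact Finset.sum_nonneg fun k _ => hnn k

lemma condProb_union_le (hπ : MatIcc π) (z : Fin n → Fin Q) (E F : Set (Fin n → Fin n → Bool)) :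
    condProb π z (E ∪ F) ≤ condProb π z E + condProb π z F := by
  simpa [Set.union_eq_iUnion, add_comm] using condProb_iUnion_le hπ z fun b => cond b E F

/-- The `n` diagonal factors equal `2`, because `bernW` puts weight `1` on both values of a
loop `x i i`; this is where `2 ^ n` comes from. -/
lemma sum_bernW_mul_exp_le (hπ : MatIcc π) (z : Fin n → Fin Q) {c : Fin n → Fin n → ℝ}
    (hc_diag : ∀ i, c i i = 0) (hc : ∀ i j, |c i j| ≤ 1) (t : ℝ) :
    ∑ x, bernW π z x * exp (t * edgeDeviation π z c x)
      ≤ 2 ^ n * exp (t ^ 2 / 2) ^ (n * (n - 1)) := by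
  set g : Fin n → Fin n → Bool → ℝ := fun i j b =>
    (if i = j then 1 else if b then π (z i) (z j) else 1 - π (z i) (z j))
      * exp (t * (c i j * ((if b then 1 else 0) - π (z i) (z j))))
  have hfactor : ∀ x, bernW π z x * exp (t * edgeDeviation π z c x)
      = ∏ i, ∏ j, g i j (x i j) := fun x => by
    simp only [g, bernW, edgeDeviation, Finset.mul_sum, exp_sum, ← Finset.prod_mul_distrib]
  have hedge : ∀ i j, ∑ b, g i j b ≤ if i = j then 2 else exp (t ^ 2 / 2) := fun i j => by
    rw [Fintype.sum_bool]
    split_ifs with hij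
    · subst hij; norm_num [g, hc_diag]
    · have hcsq : (t * c i j) ^ 2 / 2 ≤ t ^ 2 / 2 := by
        rw [mul_pow, ← sq_abs (c i j)]
        nlinarith [sq_nonneg t, pow_le_one₀ (abs_nonneg (c i j)) (hc i j) (n := 2)]
      refine le_trans (le_of_eq ?_)
        ((bernoulli_mgf_le (hπ (z i) (z j)) (t * c i j)).trans (exp_le_exp.mpr hcsq))
      simp [g, hij, mul_assoc]
  have hg : ∀ i j b, 0 ≤ g i j b := fun i j b => by
    obtain ⟨h₀, h₁⟩ := hπ (z i) (z j)
    refine mul_nonneg ?_ (exp_pos _).le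
    split_ifs <;> linarith
  calc ∑ x, bernW π z x * exp (t * edgeDeviation π z c x)
      = ∏ i, ∏ j, ∑ b, g i j b := by
        simp only [hfactor, Fintype.prod_sum]
    _ ≤ ∏ i : Fin n, ∏ j : Fin n, if i = j then 2 else exp (t ^ 2 / 2) :=
        Finset.prod_le_prod (fun i _ => Finset.prod_nonneg fun j _ =>
          Finset.sum_nonneg fun b _ => hg i j b) fun i _ =>
        Finset.prod_le_prod (fun j _ => Finset.sum_nonneg fun b _ => hg i j b)
          fun j _ => hedge i j
    _ = 2 ^ n * exp (t ^ 2 / 2) ^ (n * (n - 1)) := by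
        simp [Finset.prod_ite, Finset.filter_eq, Finset.filter_ne, mul_pow, ← pow_mul, mul_comm]

lemma condProb_edgeDeviation_ge_le (hπ : MatIcc π) (z : Fin n → Fin Q) {c : Fin n → Fin n → ℝ}
    (hc_diag : ∀ i, c i i = 0) (hc : ∀ i j, |c i j| ≤ 1) (hn : 2 ≤ n) {s : ℝ} (hs : 0 ≤ s) :
    condProb π z {x | s ≤ edgeDeviation π z c x}
      ≤ 2 ^ n * exp (-(s ^ 2 / (2 * ((n : ℝ) * ((n : ℝ) - 1))))) := by
  have hn' : (2 : ℝ) ≤ n := by exact_mod_cast hn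
  set D : ℝ := (n : ℝ) * ((n : ℝ) - 1)
  have hD : 0 < D := mul_pos (by linarith) (by linarith)
  have hcast : ((n * (n - 1) : ℕ) : ℝ) = D := by
    rw [Nat.cast_mul, Nat.cast_sub (by omega), Nat.cast_one]
  calc condProb π z {x | s ≤ edgeDeviation π z c x}
      ≤ exp (-(s / D * s)) * ∑ x, bernW π z x * exp (s / D * edgeDeviation π z c x) :=
        sum_ite_ge_le_exp_mul_sum (bernW_nonneg hπ z) (div_nonneg hs hD.le)
    _ ≤ exp (-(s / D * s)) * (2 ^ n * exp ((s / D) ^ 2 / 2) ^ (n * (n - 1))) :=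
        mul_le_mul_of_nonneg_left (sum_bernW_mul_exp_le hπ z hc_diag hc _) (exp_pos _).le
    _ = 2 ^ n * exp (-(s ^ 2 / (2 * D))) := by
        rw [← exp_nat_mul, hcast, mul_left_comm, ← exp_add]
        congr 2
        field_simp
        ring

lemma condProb_abs_edgeDeviation_ge_le (hπ : MatIcc π) (z : Fin n → Fin Q)
    {c : Fin n → Fin n → ℝ} (hc_diag : ∀ i, c i i = 0) (hc : ∀ i j, |c i j| ≤ 1) (hn : 2 ≤ n)
    {s : ℝ} (hs : 0 ≤ s) :
    condProb π z {x | s ≤ |edgeDeviation π z c x|}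
      ≤ 2 * (2 ^ n * exp (-(s ^ 2 / (2 * ((n : ℝ) * ((n : ℝ) - 1)))))) := by
  have hsplit : {x | s ≤ |edgeDeviation π z c x|}
      ⊆ {x | s ≤ edgeDeviation π z c x} ∪ {x | s ≤ edgeDeviation π z (-c) x} := fun x hx => by
    simpa [edgeDeviation_neg] using le_abs.mp hx
  calc _ ≤ _ := condProb_mono hπ z hsplit
    _ ≤ _ := condProb_union_le hπ z _ _
    _ ≤ _ := add_le_add (condProb_edgeDeviation_ge_le hπ z hc_diag hc hn hs)
        (condProb_edgeDeviation_ge_le hπ z (by simp [hc_diag]) (by simpa using hc) hn hs)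
    _ = _ := (two_mul _).symm

end EdgeDeviation

noncomputable def blockIndicator {Q n : ℕ} (z : Fin n → Fin Q) (b : Fin Q × Fin Q)
    (i j : Fin n) : ℝ :=
  if i ≠ j ∧ (z i, z j) = b then 1 else 0

lemma blockIndicator_diag {Q n : ℕ} (z : Fin n → Fin Q) (b : Fin Q × Fin Q) (i : Fin n) :
    blockIndicator z b i i = 0 := by
  simp [blockIndicator]

lemma abs_blockIndicator_le_one {Q n : ℕ} (z : Fin n → Fin Q) (b : Fin Q × Fin Q)
    (i j : Fin n) : |blockIndicator z b i j| ≤ 1 := by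
  unfold blockIndicator
  split_ifs <;> simp

lemma L1_sub_PhiL1_eq_sum_blocks {Q n : ℕ} (πs π : Fin Q → Fin Q → ℝ) (zs z : Fin n → Fin Q)
    (x : Fin n → Fin n → Bool) :
    L1 x z π - PhiL1 πs zs z π = ∑ b : Fin Q × Fin Q,
      (log (π b.1 b.2) - log (1 - π b.1 b.2)) * edgeDeviation πs zs (blockIndicator z b) x := by
  simp only [L1, PhiL1, edgeDeviation, Finset.mul_sum, ← Finset.sum_sub_distrib]
  symm
  rw [Finset.sum_comm]
  refine Finset.sum_congr rfl fun i _ => ?_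
  rw [Finset.sum_comm]
  refine Finset.sum_congr rfl fun j _ => ?_
  by_cases hij : i = j
  · simp [hij, blockIndicator]
  · simp only [blockIndicator, hij, if_false, ne_eq, not_false_eq_true, true_and]
    simp only [ite_mul, one_mul, zero_mul, mul_ite, mul_zero, Finset.sum_ite_eq,
      Finset.mem_univ, if_true]
    split_ifs <;> ring

lemma abs_log_le_abs_log_of_le {a b : ℝ} (ha : 0 < a) (hab : a ≤ b) (hb : b ≤ 1) :
    |log b| ≤ |log a| := by
  rw [abs_of_nonpos (log_nonpos (ha.le.trans hab) hb),
    abs_of_nonpos (log_nonpos ha.le (hab.trans hb))]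
  exact neg_le_neg (log_le_log ha hab)

/-- Entries `0` and `1` contribute nothing, by the convention `log 0 = 0`. -/
lemma abs_log_sub_log_one_sub_le {Q : ℕ} {π : Fin Q → Fin Q → ℝ} {ζ : ℝ} (hπ : MatIcc π)
    (hζ : 0 < ζ) (hA2 : A2 ζ π) (q l : Fin Q) :
    |log (π q l) - log (1 - π q l)| ≤ 2 * |log ζ| := by
  obtain ⟨h₀, h₁⟩ := hπ q l
  rcases h₀.eq_or_lt with h₀ | h₀
  · simp [← h₀]
  rcases h₁.eq_or_lt with h₁ | h₁
  · simp [h₁]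
  obtain ⟨hζp, hp⟩ := hA2 q l ⟨h₀, h₁⟩
  calc |log (π q l) - log (1 - π q l)| ≤ |log (π q l)| + |log (1 - π q l)| := abs_sub _ _
    _ ≤ |log ζ| + |log ζ| :=
        add_le_add (abs_log_le_abs_log_of_le hζ hζp h₁.le)
          (abs_log_le_abs_log_of_le hζ (by linarith) (by linarith))
    _ = 2 * |log ζ| := by ring

lemma exists_lt_abs_edgeDeviation_blockIndicator {Q n : ℕ} {πs π : Fin Q → Fin Q → ℝ}
    {zs z : Fin n → Fin Q} {x : Fin n → Fin n → Bool} {M s : ℝ}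
    (hM : ∀ q l, |log (π q l) - log (1 - π q l)| ≤ M)
    (h : M * Q ^ 2 * s < |L1 x z π - PhiL1 πs zs z π|) :
    ∃ b, s < |edgeDeviation πs zs (blockIndicator z b) x| := by
  by_contra! hs
  refine h.not_ge ?_
  rw [L1_sub_PhiL1_eq_sum_blocks]
  calc |∑ b : Fin Q × Fin Q, (log (π b.1 b.2) - log (1 - π b.1 b.2))
          * edgeDeviation πs zs (blockIndicator z b) x|
      ≤ ∑ b : Fin Q × Fin Q, |log (π b.1 b.2) - log (1 - π b.1 b.2)|
          * |edgeDeviation πs zs (blockIndicator z b) x| := by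
        simp only [← abs_mul]
        exact Finset.abs_sum_le_sum_abs _ _
    _ ≤ ∑ _b : Fin Q × Fin Q, M * s :=
        Finset.sum_le_sum fun b _ => mul_le_mul (hM b.1 b.2) (hs b) (abs_nonneg _)
          ((abs_nonneg _).trans (hM b.1 b.2))
    _ = M * Q ^ 2 * s := by
        simp only [Finset.sum_const, Finset.card_univ, Fintype.card_prod, Fintype.card_fin,
          nsmul_eq_mul, Nat.cast_mul]
        ring

lemma condProb_exists_deviation_gt_le {Q n : ℕ} (hQ : 0 < Q) {πs : Fin Q → Fin Q → ℝ}
    (hmat : MatIcc πs) {ζ η : ℝ} (hζ : 0 < ζ) (hη : 0 < η) (hn : 2 ≤ n) (zs : Fin n → Fin Q) :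
    condProb πs zs {x | ∃ (z : Fin n → Fin Q) (π : Fin Q → Fin Q → ℝ), MatIcc π ∧ A2 ζ π ∧
        η < |((n : ℝ) * ((n : ℝ) - 1))⁻¹ * L1 x z π
          - ((n : ℝ) * ((n : ℝ) - 1))⁻¹ * PhiL1 πs zs z π|}
      ≤ 2 * Q ^ 2 * ((2 * Q) ^ n * exp (-((η / ((2 * |log ζ| + 1) * Q ^ 2)) ^ 2 / 2
          * ((n : ℝ) * ((n : ℝ) - 1))))) := by
  set M := 2 * |log ζ| + 1
  set K := η / (M * Q ^ 2)
  set D : ℝ := (n : ℝ) * ((n : ℝ) - 1)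
  have hn' : (2 : ℝ) ≤ n := by exact_mod_cast hn
  have hD : 0 < D := mul_pos (by linarith) (by linarith)
  have hMQ : M * Q ^ 2 * K = η := mul_div_cancel₀ _ (by positivity)
  have hsubset : {x | ∃ (z : Fin n → Fin Q) (π : Fin Q → Fin Q → ℝ), MatIcc π ∧ A2 ζ π ∧
        η < |D⁻¹ * L1 x z π - D⁻¹ * PhiL1 πs zs z π|}
      ⊆ ⋃ y : (Fin n → Fin Q) × (Fin Q × Fin Q),
        {x | K * D ≤ |edgeDeviation πs zs (blockIndicator y.1 y.2) x|} := by
    rintro x ⟨z, π, hπ, hA2, hlt⟩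
    rw [← mul_sub, abs_mul, abs_inv, abs_of_pos hD, lt_inv_mul_iff₀ hD] at hlt
    have hM : ∀ q l, |log (π q l) - log (1 - π q l)| ≤ M := fun q l =>
      (abs_log_sub_log_one_sub_le hπ hζ hA2 q l).trans (le_add_of_nonneg_right zero_le_one)
    obtain ⟨b, hb⟩ := exists_lt_abs_edgeDeviation_blockIndicator (s := K * D) hM
      (by rwa [← mul_assoc, hMQ, mul_comm])
    exact Set.mem_iUnion.mpr ⟨(z, b), hb.le⟩
  calc _ ≤ _ := condProb_mono hmat zs hsubset
    _ ≤ _ := condProb_iUnion_le hmat zs _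
    _ ≤ ∑ _y : (Fin n → Fin Q) × (Fin Q × Fin Q),
          2 * (2 ^ n * exp (-((K * D) ^ 2 / (2 * D)))) :=
        Finset.sum_le_sum fun y _ => condProb_abs_edgeDeviation_ge_le hmat zs
          (blockIndicator_diag y.1 y.2) (abs_blockIndicator_le_one y.1 y.2) hn (by positivity)
    _ = _ := by
        simp only [Finset.sum_const, Finset.card_univ, Fintype.card_prod, Fintype.card_fun,
          Fintype.card_fin, nsmul_eq_mul]
        push_cast
        field_simp
        ring

theorem uniform_convergence_phi_general
    (Q : ℕ) (hQ : 0 < Q) (πs : Fin Q → Fin Q → ℝ) (ζ : ℝ)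
    (hmat : MatIcc πs) (hζ : 0 < ζ) :
    ∀ η : ℝ, 0 < η → ∀ ε : ℝ, 0 < ε → ∃ N : ℕ, ∀ n, N ≤ n → ∀ zs : Fin n → Fin Q,
      condProb πs zs {x | ∃ (z : Fin n → Fin Q) (π : Fin Q → Fin Q → ℝ),
        MatIcc π ∧ A1 π ∧ A2 ζ π ∧
        (∀ i j : Fin n, i ≠ j → (π (z i) (z j) = 0 ∨ π (z i) (z j) = 1) →
          πs (zs i) (zs j) = π (z i) (z j)) ∧
        η < |((n : ℝ) * ((n : ℝ) - 1))⁻¹ * L1 x z π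
              - ((n : ℝ) * ((n : ℝ) - 1))⁻¹ * PhiL1 πs zs z π|}
      ≤ ε := by
  intro η hη ε hε
  have hlim := ((tendsto_pow_mul_exp_neg_mul_atTop (a := 2 * Q) (by positivity)
    (c := (η / ((2 * |log ζ| + 1) * Q ^ 2)) ^ 2 / 2) (by positivity)).const_mul
    (2 * (Q : ℝ) ^ 2)).eventually (ge_mem_nhds (by rwa [mul_zero]))
  obtain ⟨N, hN⟩ := eventually_atTop.mp ((eventually_ge_atTop 2).and hlim)
  refine ⟨N, fun n hn zs => ?_⟩
  obtain ⟨hn2, hsmall⟩ := hN n hn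
  refine le_trans (condProb_mono hmat zs ?_)
    ((condProb_exists_deviation_gt_le hQ hmat hζ hη hn2 zs).trans hsmall)
  rintro x ⟨z, π, hπ, -, hA2, -, hlt⟩
  exact ⟨z, π, hπ, hA2, hlt⟩

/-- Uniform convergence in probability (uniformly in the true labels `z*`) of
`φ_n = L1/(n(n−1))` to its conditional expectation `Φ_n`, over the set `𝒫` of pairs
`(z, π)` with `π` satisfying (A1)–(A2) and such that whenever `π_{z_i,z_j} ∈ {0,1}`
it coincides with `π*_{z*_i,z*_j}`. -/
theorem uniform_convergence_phi
    (Q : ℕ) (hQ : 0 < Q) (πs : Fin Q → Fin Q → ℝ) (ζ : ℝ)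
    (hmat : MatIcc πs) (hA1 : A1 πs) (hζ : 0 < ζ) (hA2 : A2 ζ πs) :
    ∀ η : ℝ, 0 < η → ∀ ε : ℝ, 0 < ε → ∃ N : ℕ, ∀ n, N ≤ n → ∀ zs : Fin n → Fin Q,
      condProb πs zs {x | ∃ (z : Fin n → Fin Q) (π : Fin Q → Fin Q → ℝ),
        MatIcc π ∧ A1 π ∧ A2 ζ π ∧
        (∀ i j : Fin n, i ≠ j → (π (z i) (z j) = 0 ∨ π (z i) (z j) = 1) →
          πs (zs i) (zs j) = π (z i) (z j)) ∧
        η < |((n : ℝ) * ((n : ℝ) - 1))⁻¹ * L1 x z π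
              - ((n : ℝ) * ((n : ℝ) - 1))⁻¹ * PhiL1 πs zs z π|}
      ≤ ε :=
  uniform_convergence_phi_general Q hQ πs ζ hmat hζ
end

section
/- Uniform asymptotic equivalence of the variational and maximum likelihood criteria: define M_n(α, π) = (n(n−1))^{−1} L2(X_{[n]}; α, π) and J_n(α, π) = (n(n−1))^{−1} 𝒥(X_{[n]}; τ̂_{[n]}(α,π), α, π), where τ̂_{[n]}(α,π) maximizes τ ↦ 𝒥(X_{[n]}; τ, α, π) over 𝒮_n. Then under (A2) and (A3), sup_{(α,π)} |J_n(α, π) − M_n(α, π)| = o(1), ℙ-almost surely (indeed deterministically, the supremum is at most 2 log(1/γ)/(n−1)), where the supremum is taken over parameters (α,π) fulfilling (A2) and (A3). -/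
open scoped Classical
open Finset Filter MeasureTheory

/-- SBM log-likelihood `L2(X; α, π) = log ( Σ_z exp(L1(X;z,π)) Π_i α_{z_i} )`. -/
noncomputable def L2 {Q n : ℕ} (x : Fin n → Fin n → Bool) (α : Fin Q → ℝ)
    (π : Fin Q → Fin Q → ℝ) : ℝ :=
  Real.log (∑ z : Fin n → Fin Q, Real.exp (L1 x z π) * ∏ i, α (z i))

/-- Membership of `τ` in `𝒮_n`: each row of `τ` is a probability vector. -/
def memS {Q n : ℕ} (τ : Fin n → Fin Q → ℝ) : Prop :=
  (∀ i q, 0 ≤ τ i q) ∧ ∀ i, ∑ q, τ i q = 1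

/-- The variational log-likelihood `𝒥(X; τ, α, π)`. -/
noncomputable def Jfun {Q n : ℕ} (x : Fin n → Fin n → Bool) (τ : Fin n → Fin Q → ℝ)
    (α : Fin Q → ℝ) (π : Fin Q → Fin Q → ℝ) : ℝ :=
  (∑ i : Fin n, ∑ j : Fin n, if i = j then 0 else
      ∑ q, ∑ l, (if x i j then Real.log (π q l) else Real.log (1 - π q l)) * τ i q * τ j l)
    - ∑ i, ∑ q, τ i q * (Real.log (τ i q) - Real.log (α q))

/-! With `a z = log ℙ(Z = z, X = x)` and the product law `q z = ∏ i, τ i (z i)`, the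
variational criterion is `𝒥 = E_q[a] + H(q)`, so Gibbs' inequality gives `𝒥 ≤ L2 = log ∑ exp a`.
Conversely `𝒥` at the point mass on a maximiser `z₀` of `a` is `a z₀ ≥ L2 - n log Q`, and
`Q < 1/γ`, so `0 ≤ L2 - 𝒥(τ̂) ≤ n log Q ≤ 2 n log (1/γ)`. -/

section ProductWeights

-- Under `open scoped Classical`, the explicit `[DecidableEq ι]` keeps the `Fintype (ι → κ)`
-- instance syntactically equal to the one on `Fin n → Fin Q` used by `L2`.
variable {ι κ : Type*} [Fintype ι] [DecidableEq ι] [Fintype κ] {τ : ι → κ → ℝ}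

theorem sum_prod_mul_prod (hτ : ∀ k, ∑ q, τ k q = 1) (s : Finset ι) (h : ι → κ → ℝ) :
    ∑ z : ι → κ, (∏ k, τ k (z k)) * ∏ k ∈ s, h k (z k) = ∏ k ∈ s, ∑ q, τ k q * h k q := by
  calc ∑ z : ι → κ, (∏ k, τ k (z k)) * ∏ k ∈ s, h k (z k)
      = ∑ z : ι → κ, ∏ k, τ k (z k) * (if k ∈ s then h k (z k) else 1) := by
        simp_rw [prod_mul_distrib, prod_ite_mem, univ_inter]
    _ = ∏ k, ∑ q, τ k q * (if k ∈ s then h k q else 1) := by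
        rw [Fintype.prod_sum]
    _ = ∏ k, if k ∈ s then ∑ q, τ k q * h k q else 1 := by
        refine prod_congr rfl fun k _ => ?_
        split_ifs <;> simp [hτ]
    _ = ∏ k ∈ s, ∑ q, τ k q * h k q := by rw [prod_ite_mem, univ_inter]

theorem sum_prod_mul_apply (hτ : ∀ k, ∑ q, τ k q = 1) (i : ι) (f : κ → ℝ) :
    ∑ z : ι → κ, (∏ k, τ k (z k)) * f (z i) = ∑ q, τ i q * f q := by
  simpa using sum_prod_mul_prod hτ {i} fun _ => f

theorem sum_prod_mul_apply₂ (hτ : ∀ k, ∑ q, τ k q = 1) {i j : ι} (hij : i ≠ j)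
    (g : κ → κ → ℝ) :
    ∑ z : ι → κ, (∏ k, τ k (z k)) * g (z i) (z j) = ∑ q, ∑ l, g q l * τ i q * τ j l := by
  classical
  let δ (q l : κ) (k : ι) (r : κ) : ℝ := if k = i then (if r = q then 1 else 0) else
    (if r = l then 1 else 0)
  have hδ (z : ι → κ) (q l : κ) :
      ∏ k ∈ {i, j}, δ q l k (z k) = (if z i = q then 1 else 0) * (if z j = l then 1 else 0) := by
    simp [δ, prod_pair hij, hij.symm]
  have hg (z : ι → κ) : g (z i) (z j) = ∑ q, ∑ l, g q l * ∏ k ∈ {i, j}, δ q l k (z k) := by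
    simp [hδ, mul_ite]
  calc ∑ z : ι → κ, (∏ k, τ k (z k)) * g (z i) (z j)
      = ∑ q, ∑ l, g q l * ∑ z : ι → κ, (∏ k, τ k (z k)) * ∏ k ∈ {i, j}, δ q l k (z k) := by
        simp_rw [hg, mul_sum]
        rw [sum_comm]
        refine sum_congr rfl fun q _ => ?_
        rw [sum_comm]
        exact sum_congr rfl fun l _ => sum_congr rfl fun z _ => by ring
    _ = ∑ q, ∑ l, g q l * τ i q * τ j l := by
        simp_rw [sum_prod_mul_prod hτ, prod_pair hij]
        simp [δ, hij.symm, mul_assoc]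

theorem sum_prod_mul_sum (hτ : ∀ k, ∑ q, τ k q = 1) (f : ι → κ → ℝ) :
    ∑ z : ι → κ, (∏ k, τ k (z k)) * ∑ i, f i (z i) = ∑ i, ∑ q, τ i q * f i q := by
  simp_rw [mul_sum]
  rw [sum_comm]
  exact sum_congr rfl fun i _ => sum_prod_mul_apply hτ i (f i)

theorem sum_prod_mul_log_prod (hτ : ∀ k, ∑ q, τ k q = 1) :
    ∑ z : ι → κ, (∏ k, τ k (z k)) * Real.log (∏ k, τ k (z k))
      = ∑ i, ∑ q, τ i q * Real.log (τ i q) := by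
  rw [← sum_prod_mul_sum hτ]
  refine sum_congr rfl fun z _ => ?_
  by_cases hz : ∀ k, τ k (z k) ≠ 0
  · rw [Real.log_prod fun k _ => hz k]
  · obtain ⟨k, hk⟩ := not_forall_not.mp hz
    rw [prod_eq_zero (mem_univ k) hk, zero_mul, zero_mul]

end ProductWeights

section LogSumExp

variable {ι : Type*} [Fintype ι]

theorem mul_sub_log_le {p S : ℝ} (a : ℝ) (hp : 0 ≤ p) (hS : 0 < S) :
    p * (a - Real.log p - Real.log S) ≤ Real.exp a / S - p := by
  rcases hp.eq_or_lt with rfl | hp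
  · simp only [zero_mul, sub_zero]
    positivity
  · have hlog := Real.log_le_sub_one_of_pos (by positivity : 0 < Real.exp a / (p * S))
    rw [Real.log_div (Real.exp_pos a).ne' (by positivity), Real.log_mul hp.ne' hS.ne',
      Real.log_exp] at hlog
    calc p * (a - Real.log p - Real.log S) ≤ p * (Real.exp a / (p * S) - 1) :=
          mul_le_mul_of_nonneg_left (by linarith) hp.le
      _ = Real.exp a / S - p := by field_simp

theorem sum_mul_sub_log_le_log_sum_exp (p a : ι → ℝ) (hp : ∀ z, 0 ≤ p z) (hp1 : ∑ z, p z = 1) :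
    ∑ z, p z * (a z - Real.log (p z)) ≤ Real.log (∑ z, Real.exp (a z)) := by
  have : Nonempty ι := by
    by_contra h
    simp [not_nonempty_iff.mp h] at hp1
  set S := ∑ z, Real.exp (a z)
  have hS : 0 < S := sum_pos (fun z _ => Real.exp_pos _) univ_nonempty
  have key := sum_le_sum fun z (_ : z ∈ univ) => mul_sub_log_le (a z) (hp z) hS
  have hsplit : ∑ z, p z * (a z - Real.log (p z) - Real.log S)
      = ∑ z, p z * (a z - Real.log (p z)) - Real.log S := by
    simp only [mul_sub, sum_sub_distrib, ← sum_mul, hp1]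
    ring
  rw [hsplit, sum_sub_distrib, ← sum_div, div_self hS.ne', hp1] at key
  linarith

theorem log_sum_exp_le {a : ι → ℝ} {z₀ : ι} (h : ∀ z, a z ≤ a z₀) :
    Real.log (∑ z, Real.exp (a z)) ≤ Real.log (Fintype.card ι) + a z₀ := by
  have hsum : ∑ z, Real.exp (a z) ≤ Fintype.card ι * Real.exp (a z₀) := by
    simpa using sum_le_card_nsmul univ _ _ fun z _ => Real.exp_le_exp.mpr (h z)
  calc Real.log (∑ z, Real.exp (a z)) ≤ Real.log (Fintype.card ι * Real.exp (a z₀)) :=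
        Real.log_le_log (sum_pos (fun z _ => Real.exp_pos _) ⟨z₀, mem_univ _⟩) hsum
    _ = Real.log (Fintype.card ι) + a z₀ := by
        rw [Real.log_mul (Nat.cast_pos.mpr (Fintype.card_pos_iff.mpr ⟨z₀⟩)).ne'
          (Real.exp_pos _).ne', Real.log_exp]

end LogSumExp

section Variational

variable {Q n : ℕ} (x : Fin n → Fin n → Bool) (α : Fin Q → ℝ) (π : Fin Q → Fin Q → ℝ)

/-- The complete-data log-likelihood `log ℙ(Z = z, X = x)`. -/
noncomputable def completeLogLik (z : Fin n → Fin Q) : ℝ :=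
  L1 x z π + ∑ i, Real.log (α (z i))

theorem L2_eq_log_sum_exp (hα : ∀ q, 0 < α q) :
    L2 x α π = Real.log (∑ z, Real.exp (completeLogLik x α π z)) := by
  simp only [L2, completeLogLik, Real.exp_add, Real.exp_sum, Real.exp_log (hα _)]

theorem Jfun_eq_sum_prod_mul {τ : Fin n → Fin Q → ℝ} (hτ : ∀ i, ∑ q, τ i q = 1) :
    Jfun x τ α π = ∑ z : Fin n → Fin Q, (∏ i, τ i (z i)) *
      (completeLogLik x α π z - Real.log (∏ i, τ i (z i))) := by
  have hL1 : ∑ z : Fin n → Fin Q, (∏ k, τ k (z k)) * L1 x z π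
      = ∑ i, ∑ j, if i = j then 0 else ∑ q, ∑ l,
          (if x i j then Real.log (π q l) else Real.log (1 - π q l)) * τ i q * τ j l := by
    simp_rw [L1, mul_sum]
    rw [sum_comm]
    refine sum_congr rfl fun i _ => ?_
    rw [sum_comm]
    refine sum_congr rfl fun j _ => ?_
    by_cases hij : i = j
    · simp [hij]
    · simp only [if_neg hij]
      exact sum_prod_mul_apply₂ hτ hij fun q l =>
        if x i j then Real.log (π q l) else Real.log (1 - π q l)
  simp only [completeLogLik, mul_sub, mul_add, sum_sub_distrib, sum_add_distrib, hL1,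
    sum_prod_mul_sum hτ fun _ q => Real.log (α q), sum_prod_mul_log_prod hτ, Jfun]
  ring

theorem Jfun_pointMass (z : Fin n → Fin Q) :
    Jfun x (fun i q => if q = z i then (1 : ℝ) else 0) α π = completeLogLik x α π z := by
  simp only [Jfun, completeLogLik, L1, sub_eq_add_neg]
  congr 1
  · refine sum_congr rfl fun i _ => sum_congr rfl fun j _ => ?_
    simp [mul_ite]
  · simp [ite_mul, ← sum_neg_distrib]

theorem memS_pointMass (z : Fin n → Fin Q) : memS fun i q => if q = z i then (1 : ℝ) else 0 :=
  ⟨fun i q => by dsimp only; positivity, fun i => by simp⟩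

theorem Jfun_le_L2 (hα : ∀ q, 0 < α q) {τ : Fin n → Fin Q → ℝ} (hτ : memS τ) :
    Jfun x τ α π ≤ L2 x α π := by
  rw [Jfun_eq_sum_prod_mul x α π hτ.2, L2_eq_log_sum_exp x α π hα]
  refine sum_mul_sub_log_le_log_sum_exp _ _ (fun z => prod_nonneg fun i _ => hτ.1 i (z i)) ?_
  rw [← Fintype.prod_sum, prod_eq_one fun i _ => hτ.2 i]

theorem L2_le_Jfun_add [NeZero Q] (hα : ∀ q, 0 < α q) {τ : Fin n → Fin Q → ℝ}
    (hmax : ∀ τ', memS τ' → Jfun x τ' α π ≤ Jfun x τ α π) :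
    L2 x α π ≤ Jfun x τ α π + n * Real.log Q := by
  obtain ⟨z₀, hz₀⟩ := Finite.exists_max (completeLogLik x α π)
  have hJ := hmax _ (memS_pointMass z₀)
  rw [Jfun_pointMass] at hJ
  have := log_sum_exp_le hz₀
  rw [Fintype.card_fun, Fintype.card_fin, Fintype.card_fin, Nat.cast_pow, Real.log_pow] at this
  rw [L2_eq_log_sum_exp x α π hα]
  linarith

theorem abs_Jfun_sub_L2_le [NeZero Q] {C : ℝ} (hC : Real.log Q ≤ C) (hn : 2 ≤ n)
    (hα : ∀ q, 0 < α q) {τ : Fin n → Fin Q → ℝ} (hτ : memS τ)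
    (hmax : ∀ τ', memS τ' → Jfun x τ' α π ≤ Jfun x τ α π) :
    |((n : ℝ) * ((n : ℝ) - 1))⁻¹ * Jfun x τ α π - ((n : ℝ) * ((n : ℝ) - 1))⁻¹ * L2 x α π|
      ≤ C / ((n : ℝ) - 1) := by
  have hJ := Jfun_le_L2 x α π hα hτ
  have hL := L2_le_Jfun_add x α π hα hmax
  have hn' : (0 : ℝ) < n - 1 := by
    rw [sub_pos]
    exact_mod_cast hn
  have hc : 0 < ((n : ℝ) * (n - 1))⁻¹ := by positivity
  rw [← mul_sub, abs_mul, abs_sub_comm, abs_of_nonneg (sub_nonneg.mpr hJ), abs_of_pos hc]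
  calc ((n : ℝ) * (n - 1))⁻¹ * (L2 x α π - Jfun x τ α π)
      ≤ ((n : ℝ) * (n - 1))⁻¹ * (n * Real.log Q) :=
        mul_le_mul_of_nonneg_left (by linarith) hc.le
    _ = Real.log Q / (n - 1) := by field_simp
    _ ≤ C / (n - 1) := by gcongr

end Variational

theorem A3.pos {Q : ℕ} {γ : ℝ} {α : Fin Q → ℝ} (h : A3 γ α) (hγ : 0 < γ) (q : Fin Q) :
    0 < α q :=
  hγ.trans_le (h q).1

theorem variational_likelihood_gap_general
    (Q : ℕ) (hQ : 0 < Q) (ζ γ : ℝ) (hγ0 : 0 < γ) (hγQ : γ < 1 / Q) :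
    (∀ n : ℕ, 2 ≤ n → ∀ (x : Fin n → Fin n → Bool) (α : Fin Q → ℝ)
        (π : Fin Q → Fin Q → ℝ),
      ProbVec α → A3 γ α → MatIcc π → A2 ζ π →
      ∀ τ : Fin n → Fin Q → ℝ, memS τ →
        (∀ τ' : Fin n → Fin Q → ℝ, memS τ' → Jfun x τ' α π ≤ Jfun x τ α π) →
        |((n : ℝ) * ((n : ℝ) - 1))⁻¹ * Jfun x τ α π
            - ((n : ℝ) * ((n : ℝ) - 1))⁻¹ * L2 x α π|
          ≤ 2 * Real.log (1 / γ) / ((n : ℝ) - 1)) ∧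
    (∀ ε : ℝ, 0 < ε → ∃ N : ℕ, ∀ n, N ≤ n →
      ∀ (x : Fin n → Fin n → Bool) (α : Fin Q → ℝ) (π : Fin Q → Fin Q → ℝ),
      ProbVec α → A3 γ α → MatIcc π → A2 ζ π →
      ∀ τ : Fin n → Fin Q → ℝ, memS τ →
        (∀ τ' : Fin n → Fin Q → ℝ, memS τ' → Jfun x τ' α π ≤ Jfun x τ α π) →
        |((n : ℝ) * ((n : ℝ) - 1))⁻¹ * Jfun x τ α π
            - ((n : ℝ) * ((n : ℝ) - 1))⁻¹ * L2 x α π| ≤ ε) := by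
  have : NeZero Q := ⟨hQ.ne'⟩
  have hlogQ : Real.log Q ≤ 2 * Real.log (1 / γ) := by
    have hQγ : (Q : ℝ) < 1 / γ := (lt_one_div hγ0 (Nat.cast_pos.mpr hQ)).mp hγQ
    have := Real.log_le_log (Nat.cast_pos.mpr hQ) hQγ.le
    linarith [Real.log_nonneg (Nat.one_le_cast.mpr hQ |>.trans hQγ.le)]
  refine ⟨fun n hn x α π _ hA3 _ _ τ hτ hmax =>
    abs_Jfun_sub_L2_le x α π hlogQ hn (hA3.pos hγ0) hτ hmax, fun ε hε => ?_⟩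
  have hlim : Tendsto (fun n : ℕ => 2 * Real.log (1 / γ) / ((n : ℝ) - 1)) atTop (nhds 0) :=
    tendsto_const_nhds.div_atTop (tendsto_atTop_add_const_right _ (-1) tendsto_natCast_atTop_atTop)
  obtain ⟨N, hN⟩ :=
    eventually_atTop.mp ((eventually_ge_atTop 2).and (hlim.eventually (ge_mem_nhds hε)))
  exact ⟨N, fun n hn x α π _ hA3 _ _ τ hτ hmax =>
    (abs_Jfun_sub_L2_le x α π hlogQ (hN n hn).1 (hA3.pos hγ0) hτ hmax).trans (hN n hn).2⟩

/-- Uniform asymptotic equivalence of the variational and maximum-likelihood criteria: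
for every `n ≥ 2`, adjacency matrix `x`, parameters `(α, π)` satisfying (A2)–(A3) and
any maximizer `τ̂` of `τ ↦ 𝒥(x; τ, α, π)` over `𝒮_n`,
`|J_n(α,π) − M_n(α,π)| ≤ 2 log(1/γ)/(n−1)`; in particular the supremum over such
`(α, π)` is `o(1)`. -/
theorem variational_likelihood_gap
    (Q : ℕ) (hQ : 0 < Q) (ζ γ : ℝ) (hζ : 0 < ζ) (hγ0 : 0 < γ) (hγQ : γ < 1 / Q) :
    (∀ n : ℕ, 2 ≤ n → ∀ (x : Fin n → Fin n → Bool) (α : Fin Q → ℝ)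
        (π : Fin Q → Fin Q → ℝ),
      ProbVec α → A3 γ α → MatIcc π → A2 ζ π →
      ∀ τ : Fin n → Fin Q → ℝ, memS τ →
        (∀ τ' : Fin n → Fin Q → ℝ, memS τ' → Jfun x τ' α π ≤ Jfun x τ α π) →
        |((n : ℝ) * ((n : ℝ) - 1))⁻¹ * Jfun x τ α π
            - ((n : ℝ) * ((n : ℝ) - 1))⁻¹ * L2 x α π|
          ≤ 2 * Real.log (1 / γ) / ((n : ℝ) - 1)) ∧
    (∀ ε : ℝ, 0 < ε → ∃ N : ℕ, ∀ n, N ≤ n →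
      ∀ (x : Fin n → Fin n → Bool) (α : Fin Q → ℝ) (π : Fin Q → Fin Q → ℝ),
      ProbVec α → A3 γ α → MatIcc π → A2 ζ π →
      ∀ τ : Fin n → Fin Q → ℝ, memS τ →
        (∀ τ' : Fin n → Fin Q → ℝ, memS τ' → Jfun x τ' α π ≤ Jfun x τ α π) →
        |((n : ℝ) * ((n : ℝ) - 1))⁻¹ * Jfun x τ α π
            - ((n : ℝ) * ((n : ℝ) - 1))⁻¹ * L2 x α π| ≤ ε) :=
  variational_likelihood_gap_general Q hQ ζ γ hγ0 hγQ
end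

section
/- Accuracy of the KL-optimal product approximation at a point: let P̃ be a probability distribution on {1,…,Q}^n, let z* ∈ {1,…,Q}^n with P̃(z*) > 0, and let D ∈ 𝒟_n be any distribution minimizing the Kullback–Leibler divergence K(·, P̃) over the family 𝒟_n of product multinomial distributions on {1,…,Q}^n. Then |D(z*) − P̃(z*)| ≤ √( −(1/2) log P̃(z*) ). -/
open scoped Classical
open Finset

/-- The product distribution `D_τ(z) = Π_i τ_{i,z_i}` on `{1,…,Q}^n`. -/
noncomputable def Dprod {Q n : ℕ} (τ : Fin n → Fin Q → ℝ) (z : Fin n → Fin Q) : ℝ :=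
  ∏ i, τ i (z i)

/-- Kullback–Leibler divergence `K(D, P) = Σ_z D(z) log(D(z)/P(z))` between two
distributions on `{1,…,Q}^n`, with values in `EReal` (`+∞` if `D` is not absolutely
continuous with respect to `P`, and the convention `0 log 0 = 0`). -/
noncomputable def klDivF {Q n : ℕ} (D P : (Fin n → Fin Q) → ℝ) : EReal :=
  ∑ z : Fin n → Fin Q,
    if D z = 0 then (0 : EReal)
    else if P z = 0 then (⊤ : EReal)
    else ((D z * Real.log (D z / P z) : ℝ) : EReal)

/-!
The Dirac mass at `z*` is itself a product distribution, and `K(δ_{z*}, P̃) = -log P̃(z*)`.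
Hence a minimiser `D` satisfies `K(D, P̃) ≤ -log P̃(z*) < ∞`, so in particular `D ≪ P̃`.
Merging all points other than `z*` into one does not increase the divergence (log-sum
inequality), so `K(D, P̃)` dominates the divergence between the Bernoulli laws with parameters
`D(z*)` and `P̃(z*)`, which by Pinsker's inequality is at least `2 (D(z*) - P̃(z*))²`.
-/

open Real

namespace EReal

lemma coe_sum {α : Type*} (s : Finset α) (f : α → ℝ) :
    ((∑ a ∈ s, f a : ℝ) : EReal) = ∑ a ∈ s, (f a : EReal) :=
  map_sum (⟨⟨Real.toEReal, coe_zero⟩, coe_add⟩ : ℝ →+ EReal) f s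

lemma sum_ne_bot {α : Type*} {s : Finset α} {f : α → EReal} (h : ∀ a ∈ s, f a ≠ ⊥) :
    ∑ a ∈ s, f a ≠ ⊥ :=
  sum_induction f (· ≠ ⊥) (fun _ _ ha hb => add_ne_bot_iff.2 ⟨ha, hb⟩) zero_ne_bot h

lemma sum_eq_top_of_mem {α : Type*} [DecidableEq α] {s : Finset α} {f : α → EReal}
    (h : ∀ a ∈ s, f a ≠ ⊥) {a : α} (ha : a ∈ s) (hfa : f a = ⊤) : ∑ b ∈ s, f b = ⊤ := by
  rw [← add_sum_erase s f ha, hfa]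
  exact top_add_of_ne_bot (sum_ne_bot fun b hb => h b (mem_of_mem_erase hb))

end EReal

namespace Real

theorem sum_mul_log_div_sum_le {ι : Type*} (s : Finset ι) {a b : ι → ℝ}
    (ha : ∀ i ∈ s, 0 ≤ a i) (hb : ∀ i ∈ s, 0 ≤ b i) (hab : ∀ i ∈ s, b i = 0 → a i = 0) :
    (∑ i ∈ s, a i) * log ((∑ i ∈ s, a i) / ∑ i ∈ s, b i) ≤ ∑ i ∈ s, a i * log (a i / b i) := by
  rcases (sum_nonneg hb).eq_or_lt with hB | hB
  · have hb0 := (sum_eq_zero_iff_of_nonneg hb).1 hB.symm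
    rw [← hB, div_zero, log_zero, mul_zero]
    exact (sum_eq_zero fun i hi => by rw [hb0 i hi, div_zero, log_zero, mul_zero]).ge
  have hcancel : ∀ i ∈ s, b i * (a i / b i) = a i := fun i hi => by
    rw [mul_comm]; exact div_mul_cancel_of_imp (hab i hi)
  have hjensen := convexOn_mul_log.map_centerMass_le hb hB
    (fun i hi => (div_nonneg (ha i hi) (hb i hi) : a i / b i ∈ Set.Ici 0))
  have hmass : ∑ i ∈ s, b i * (a i / b i * log (a i / b i)) = ∑ i ∈ s, a i * log (a i / b i) :=
    sum_congr rfl fun i hi => by rw [← mul_assoc, hcancel i hi]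
  simp only [centerMass, smul_eq_mul, Function.comp_apply, sum_congr rfl hcancel, hmass] at hjensen
  rw [inv_mul_eq_div, inv_mul_eq_div, div_mul_eq_mul_div] at hjensen
  exact (div_le_div_iff_of_pos_right hB).1 hjensen

end Real

noncomputable def bernoulliKL (d p : ℝ) : ℝ :=
  d * log (d / p) + (1 - d) * log ((1 - d) / (1 - p))

lemma mul_log_div_eq_mul_log_sub (x : ℝ) {c : ℝ} (hc : c ≠ 0) :
    x * log (x / c) = x * log x - x * log c := by
  rcases eq_or_ne x 0 with rfl | hx
  · simp
  · rw [log_div hx hc, mul_sub]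

lemma monotoneOn_log_sub_log_one_sub_sub_four_mul :
    MonotoneOn (fun x => log x - log (1 - x) - 4 * x) (Set.Ioo 0 1) := by
  have hderiv : ∀ x ∈ Set.Ioo (0 : ℝ) 1,
      HasDerivAt (fun x => log x - log (1 - x) - 4 * x) (x⁻¹ + (1 - x)⁻¹ - 4) x := by
    intro x ⟨hx0, hx1⟩
    have h1x : HasDerivAt (fun x => log (1 - x)) (-1 / (1 - x)) x :=
      ((hasDerivAt_id' x).const_sub 1).log (sub_pos.2 hx1).ne'
    exact (((hasDerivAt_log hx0.ne').sub h1x).sub ((hasDerivAt_id' x).const_mul 4)).congr_deriv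
      (by ring)
  refine monotoneOn_of_hasDerivWithinAt_nonneg (convex_Ioo 0 1)
    (fun x hx => (hderiv x hx).continuousAt.continuousWithinAt)
    (fun x hx => (hderiv x (interior_subset hx)).hasDerivWithinAt) fun x hx => ?_
  rw [interior_Ioo] at hx
  obtain ⟨hx0, hx1⟩ := hx
  -- `1/x + 1/(1 - x) = 1/(x (1 - x)) ≥ 4`
  rw [inv_add_inv hx0.ne' (by linarith), add_sub_cancel, sub_nonneg, le_one_div]
  all_goals nlinarith [sq_nonneg (2 * x - 1)]

lemma two_mul_sq_sub_le_bernoulliKL_of_mem_Ioo {d p : ℝ} (hp : p ∈ Set.Ioo 0 1) (hd0 : 0 ≤ d)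
    (hd1 : d ≤ 1) : 2 * (d - p) ^ 2 ≤ bernoulliKL d p := by
  obtain ⟨hp0, hp1⟩ := hp
  set G : ℝ → ℝ := fun x => log x - log (1 - x) - 4 * x
  -- `bernoulliKL x p - 2 (x - p)²`, written so as to be continuous on all of `ℝ`
  set gap : ℝ → ℝ := fun x =>
    x * log x - x * log p + ((1 - x) * log (1 - x) - (1 - x) * log (1 - p)) - 2 * (x - p) ^ 2
  have hgap_cont : Continuous gap := by
    have : Continuous fun x : ℝ => (1 - x) * log (1 - x) :=
      continuous_mul_log.comp (continuous_const.sub continuous_id')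
    simp only [gap]
    fun_prop
  have hgap_deriv : ∀ x ∈ Set.Ioo (0 : ℝ) 1, HasDerivAt gap (G x - G p) x := by
    intro x ⟨hx0, hx1⟩
    have hsub := (hasDerivAt_id' x).const_sub 1
    have hlog := (hasDerivAt_mul_log hx0.ne').sub ((hasDerivAt_id' x).mul_const (log p))
    have hlog₁ := ((hasDerivAt_mul_log (sub_pos.2 hx1).ne').comp x hsub).sub
      (hsub.mul_const (log (1 - p)))
    have hsq := ((hasDerivAt_id' x).sub_const p).pow 2 |>.const_mul 2
    exact ((hlog.add hlog₁).sub hsq).congr_deriv (by simp only [G]; ring)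
  have hG := monotoneOn_log_sub_log_one_sub_sub_four_mul
  have hgap_p : gap p = 0 := by simp only [gap]; ring
  have hgap_nonneg : 0 ≤ gap d := by
    rcases le_total d p with hdp | hpd
    · refine hgap_p ▸ antitoneOn_of_hasDerivWithinAt_nonpos (f' := fun x => G x - G p)
        (convex_Icc 0 p) hgap_cont.continuousOn (fun x hx => ?_) (fun x hx => ?_)
        ⟨hd0, hdp⟩ ⟨hp0.le, le_rfl⟩ hdp
      all_goals rw [interior_Icc] at hx
      · exact (hgap_deriv x ⟨hx.1, hx.2.trans hp1⟩).hasDerivWithinAt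
      · exact sub_nonpos.2 (hG ⟨hx.1, hx.2.trans hp1⟩ ⟨hp0, hp1⟩ hx.2.le)
    · refine hgap_p ▸ monotoneOn_of_hasDerivWithinAt_nonneg (f' := fun x => G x - G p)
        (convex_Icc p 1) hgap_cont.continuousOn (fun x hx => ?_) (fun x hx => ?_)
        ⟨le_rfl, hp1.le⟩ ⟨hpd, hd1⟩ hpd
      all_goals rw [interior_Icc] at hx
      · exact (hgap_deriv x ⟨hp0.trans hx.1, hx.2⟩).hasDerivWithinAt
      · exact sub_nonneg.2 (hG ⟨hp0, hp1⟩ ⟨hp0.trans hx.1, hx.2⟩ hx.1.le)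
  rw [bernoulliKL, mul_log_div_eq_mul_log_sub _ hp0.ne',
    mul_log_div_eq_mul_log_sub _ (sub_pos.2 hp1).ne']
  linarith

theorem two_mul_sq_sub_le_bernoulliKL {d p : ℝ} (hp0 : 0 ≤ p) (hp1 : p ≤ 1) (hd0 : 0 ≤ d)
    (hd1 : d ≤ 1) (h0 : p = 0 → d = 0) (h1 : p = 1 → d = 1) :
    2 * (d - p) ^ 2 ≤ bernoulliKL d p := by
  rcases hp0.eq_or_lt with rfl | hp0
  · simp [bernoulliKL, h0 rfl]
  rcases hp1.eq_or_lt with rfl | hp1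
  · simp [bernoulliKL, h1 rfl]
  exact two_mul_sq_sub_le_bernoulliKL_of_mem_Ioo ⟨hp0, hp1⟩ hd0 hd1

section FiniteDistribution

variable {α : Type*} [Fintype α] [DecidableEq α] {D P : α → ℝ}

lemma apply_eq_one_of_absolutelyContinuous (hD1 : ∑ z, D z = 1) (hP0 : ∀ z, 0 ≤ P z)
    (hP1 : ∑ z, P z = 1) (hac : ∀ z, P z = 0 → D z = 0) {a : α} (ha : P a = 1) : D a = 1 := by
  have hP_rest : ∀ z ∈ univ.erase a, P z = 0 := by
    refine (sum_eq_zero_iff_of_nonneg fun z _ => hP0 z).1 ?_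
    rw [sum_erase_eq_sub (mem_univ a), hP1, ha, sub_self]
  have hD_rest : ∑ z ∈ univ.erase a, D z = 0 := sum_eq_zero fun z hz => hac z (hP_rest z hz)
  rw [sum_erase_eq_sub (mem_univ a), hD1] at hD_rest
  linarith

theorem bernoulliKL_le_sum_mul_log_div (hD0 : ∀ z, 0 ≤ D z) (hD1 : ∑ z, D z = 1)
    (hP0 : ∀ z, 0 ≤ P z) (hP1 : ∑ z, P z = 1) (hac : ∀ z, P z = 0 → D z = 0) (a : α) :
    bernoulliKL (D a) (P a) ≤ ∑ z, D z * log (D z / P z) := by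
  have hrest := sum_mul_log_div_sum_le (univ.erase a) (fun z _ => hD0 z) (fun z _ => hP0 z)
    fun z _ => hac z
  rw [sum_erase_eq_sub (mem_univ a), sum_erase_eq_sub (mem_univ a), hD1, hP1] at hrest
  rw [← add_sum_erase _ _ (mem_univ a), bernoulliKL]
  exact (add_le_add_iff_left _).2 hrest

theorem two_mul_sq_sub_le_sum_mul_log_div (hD0 : ∀ z, 0 ≤ D z) (hD1 : ∑ z, D z = 1)
    (hP0 : ∀ z, 0 ≤ P z) (hP1 : ∑ z, P z = 1) (hac : ∀ z, P z = 0 → D z = 0) (a : α) :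
    2 * (D a - P a) ^ 2 ≤ ∑ z, D z * log (D z / P z) :=
  (two_mul_sq_sub_le_bernoulliKL (hP0 a) (hP1 ▸ single_le_sum (fun z _ => hP0 z) (mem_univ a))
    (hD0 a) (hD1 ▸ single_le_sum (fun z _ => hD0 z) (mem_univ a)) (hac a)
    (apply_eq_one_of_absolutelyContinuous hD1 hP0 hP1 hac)).trans
    (bernoulliKL_le_sum_mul_log_div hD0 hD1 hP0 hP1 hac a)

end FiniteDistribution

section ProductDistribution

variable {Q n : ℕ}

lemma memS.dprod_nonneg {τ : Fin n → Fin Q → ℝ} (hτ : memS τ) (z : Fin n → Fin Q) :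
    0 ≤ Dprod τ z :=
  prod_nonneg fun i _ => hτ.1 i (z i)

lemma memS.sum_dprod {τ : Fin n → Fin Q → ℝ} (hτ : memS τ) : ∑ z, Dprod τ z = 1 := by
  simp only [Dprod, ← Fintype.prod_sum, hτ.2, prod_const_one]

lemma memS_pi_single (zs : Fin n → Fin Q) : memS fun i => Pi.single (zs i) (1 : ℝ) :=
  ⟨fun i q => by by_cases h : q = zs i <;> simp [h], fun _ => by simp⟩

lemma dprod_pi_single (zs : Fin n → Fin Q) :
    Dprod (fun i => Pi.single (zs i) (1 : ℝ)) = Pi.single zs 1 := by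
  ext z
  simp [Dprod, Pi.single_apply, prod_boole, funext_iff]

lemma klDivF_eq_top {D P : (Fin n → Fin Q) → ℝ} {z : Fin n → Fin Q} (hD : D z ≠ 0)
    (hP : P z = 0) : klDivF D P = ⊤ :=
  EReal.sum_eq_top_of_mem (fun _ _ => by split_ifs <;> simp [-EReal.coe_mul]) (mem_univ z)
    (by simp [hD, hP])

lemma klDivF_eq_coe_sum {D P : (Fin n → Fin Q) → ℝ} (hac : ∀ z, P z = 0 → D z = 0) :
    klDivF D P = ((∑ z, D z * log (D z / P z) : ℝ) : EReal) := by
  rw [klDivF, EReal.coe_sum]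
  refine sum_congr rfl fun z _ => ?_
  by_cases hD : D z = 0
  · simp [hD]
  · simp [hD, mt (hac z) hD]

lemma klDivF_pi_single {P : (Fin n → Fin Q) → ℝ} {zs : Fin n → Fin Q} (hP : P zs ≠ 0) :
    klDivF (Pi.single zs 1) P = ((-log (P zs) : ℝ) : EReal) := by
  rw [klDivF_eq_coe_sum fun z hz => Pi.single_eq_of_ne (ne_of_apply_ne P (hz ▸ hP.symm)) 1,
    Fintype.sum_eq_single zs fun z hz => by simp [hz]]
  simp [log_inv]

end ProductDistribution

/-- Accuracy of the KL-optimal product approximation at a point: if `D_τ` minimizes the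
Kullback–Leibler divergence to a probability distribution `P̃` on `{1,…,Q}^n` over the
family of product multinomial distributions, then for any point `z*` with `P̃(z*) > 0`,
`|D_τ(z*) − P̃(z*)| ≤ √(−(1/2) log P̃(z*))`. -/
theorem kl_optimal_product_pointwise
    (Q n : ℕ) (P : (Fin n → Fin Q) → ℝ)
    (hP0 : ∀ z, 0 ≤ P z) (hPsum : ∑ z, P z = 1)
    (zs : Fin n → Fin Q) (hzs : 0 < P zs)
    (τ : Fin n → Fin Q → ℝ) (hτ : memS τ)
    (hmin : ∀ τ' : Fin n → Fin Q → ℝ, memS τ' →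
      klDivF (Dprod τ) P ≤ klDivF (Dprod τ') P) :
    |Dprod τ zs - P zs| ≤ Real.sqrt (-(1 / 2) * Real.log (P zs)) := by
  have hK := hmin _ (memS_pi_single zs)
  rw [dprod_pi_single, klDivF_pi_single hzs.ne'] at hK
  have hac : ∀ z, P z = 0 → Dprod τ z = 0 := fun z hPz => by
    by_contra hD
    rw [klDivF_eq_top hD hPz] at hK
    exact (EReal.coe_lt_top _).not_ge hK
  rw [klDivF_eq_coe_sum hac, EReal.coe_le_coe_iff] at hK
  have hpinsker := two_mul_sq_sub_le_sum_mul_log_div hτ.dprod_nonneg hτ.sum_dprod hP0 hPsum hac zs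
  rw [← sqrt_sq_eq_abs]
  exact sqrt_le_sqrt (by linarith)
end
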